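/- arXiv:2211.00928 — 2 statements merged into one kernel-verified Lean document; each statement's English description precedes it below -/
import Mathlib

section
/- Let a, b : {1, …, n} → ℝ be two finite sequences that differ in exactly one coordinate i_0 (a_i = b_i for all i ≠ i_0), and suppose all entries of a and b lie in a common interval of length M, i.e., |u − v| ≤ M for any two values u, v among the entries of a and b. Let a_{(1)} ≥ ⋯ ≥ a_{(n)} and b_{(1)} ≥ ⋯ ≥ b_{(n)} denote the decreasing rearrangements of a and b. Then Σ_{j=1}^n |a_{(j)} − b_{(j)}| ≤ M. -/
/-!
Order statistics are monotone in the sequence. Hence if `a ≤ b` pointwise, every term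
`|a₍ⱼ₎ - b₍ⱼ₎|` equals `b₍ⱼ₎ - a₍ⱼ₎`, and since sorting preserves sums the ℓ¹ distance
is `∑ᵢ (bᵢ - aᵢ)`. Two sequences differing only at `i₀` are comparable, and then this
sum is `|a i₀ - b i₀| ≤ M`.
-/

open Finset

/-- The decreasing rearrangement (order statistics) of a finite real sequence,
with a fixed tie-breaking rule: `sortDesc a j` is the `j`-th largest value of `a`,
so that `sortDesc a 0 ≥ sortDesc a 1 ≥ ⋯`. -/
noncomputable def sortDesc {n : ℕ} (a : Fin n → ℝ) : Fin n → ℝ :=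
  fun j => a (Tuple.sort (fun i => -a i) j)

section

variable {n : ℕ}

theorem sortDesc_antitone (a : Fin n → ℝ) : Antitone (sortDesc a) :=
  fun _ _ hij => neg_le_neg_iff.mp (Tuple.monotone_sort (fun i => -a i) hij)

theorem sum_sortDesc (a : Fin n → ℝ) : ∑ j, sortDesc a j = ∑ i, a i :=
  Equiv.sum_comp _ a

theorem card_filter_le_sortDesc (a : Fin n → ℝ) (x : ℝ) :
    #{i | x ≤ sortDesc a i} = #{i | x ≤ a i} :=
  card_equiv (Tuple.sort fun i => -a i) fun _ => by simp only [mem_filter_univ]; rfl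

-- `x ≤ a₍ⱼ₎` iff more than `j` entries of `a` are at least `x`, a count monotone in `a`.
theorem sortDesc_mono : Monotone (sortDesc (n := n)) := by
  intro a b h j
  rw [← Tuple.lt_card_ge_iff_apply_ge_of_antitone (sortDesc_antitone b)]
  calc (j : ℕ) < #{i | sortDesc a j ≤ sortDesc a i} :=
        (Tuple.lt_card_ge_iff_apply_ge_of_antitone (sortDesc_antitone a)).2 le_rfl
    _ = #{i | sortDesc a j ≤ a i} := card_filter_le_sortDesc a _
    _ ≤ #{i | sortDesc a j ≤ b i} :=
        card_le_card (monotone_filter_right _ fun i _ hi => hi.trans (h i))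
    _ = #{i | sortDesc a j ≤ sortDesc b i} := (card_filter_le_sortDesc b _).symm

theorem sum_abs_sortDesc_sub_of_le {a b : Fin n → ℝ} (h : a ≤ b) :
    ∑ j, |sortDesc a j - sortDesc b j| = ∑ i, (b i - a i) := by
  calc ∑ j, |sortDesc a j - sortDesc b j| = ∑ j, (sortDesc b j - sortDesc a j) :=
        sum_congr rfl fun j _ => by
          rw [abs_sub_comm, abs_of_nonneg (sub_nonneg.2 (sortDesc_mono h j))]
    _ = ∑ i, (b i - a i) := by rw [sum_sub_distrib, sum_sortDesc, sum_sortDesc, sum_sub_distrib]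

end

/-- **Key combinatorial lemma.** If two sequences `a, b : Fin n → ℝ` differ in exactly one
coordinate `i₀`, and all entries of `a` and `b` lie within a common interval of length `M`
(any two values among the entries differ by at most `M` in absolute value), then the ℓ¹
distance between their decreasing rearrangements is at most `M`. -/
theorem l1_dist_sortDesc_le
    (n : ℕ) (a b : Fin n → ℝ) (i0 : Fin n)
    (hab : ∀ i, i ≠ i0 → a i = b i)
    (M : ℝ)
    (hM : ∀ u ∈ Set.range a ∪ Set.range b, ∀ v ∈ Set.range a ∪ Set.range b, |u - v| ≤ M) :
    ∑ j, |sortDesc a j - sortDesc b j| ≤ M := by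
  wlog hi0 : a i0 ≤ b i0 generalizing a b
  · simpa only [abs_sub_comm] using this b a (fun i hi => (hab i hi).symm)
      (by simpa only [Set.union_comm] using hM) (le_of_not_ge hi0)
  have hle : a ≤ b := fun i => if hi : i = i0 then hi ▸ hi0 else (hab i hi).le
  calc ∑ j, |sortDesc a j - sortDesc b j| = b i0 - a i0 := by
        rw [sum_abs_sortDesc_sub_of_le hle,
          sum_eq_single i0 (fun i _ hi => by rw [hab i hi, sub_self]) (by simp)]
    _ ≤ |b i0 - a i0| := le_abs_self _
    _ ≤ M := hM _ (Or.inr ⟨i0, rfl⟩) _ (Or.inl ⟨i0, rfl⟩)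
end

section
/- Define Φ(D) = sup_{θ∈Θ} ( E_{(x,y)∼P}[ℓ(f(x;θ), y)] − L_q(θ; g(D)) ). If D and D' are two datasets of n samples differing in exactly one point (D_i = D'_i for all i ≠ i_0), then |Φ(D) − Φ(D')| ≤ (s/q)·(M/n). -/
open MeasureTheory Finset

noncomputable section

/-- Euclidean space `ℝ^d` as functions `Fin d → ℝ`. -/
abbrev Vec (d : ℕ) : Type := Fin d → ℝ

/-- Per-sample loss `L_i(θ; D) = ℓ(f(x_i; θ), y_i)`. -/
def sampleLoss {dx dy dth n : ℕ} (ℓ : Vec dy → Vec dy → ℝ)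
    (f : Vec dx → Vec dth → Vec dy) (θ : Vec dth)
    (D : Fin n → Vec dx × Vec dy) (i : Fin n) : ℝ :=
  ℓ (f (D i).1 θ) (D i).2

/-- The permutation `j ↦ (j)` arranging the per-sample losses in decreasing order
`L_{(1)}(θ;D) ≥ ⋯ ≥ L_{(n)}(θ;D)`, with a fixed tie-breaking rule. -/
def ordIdx {dx dy dth n : ℕ} (ℓ : Vec dy → Vec dy → ℝ)
    (f : Vec dx → Vec dth → Vec dy) (θ : Vec dth)
    (D : Fin n → Vec dx × Vec dy) : Equiv.Perm (Fin n) :=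
  Tuple.sort (fun i => -sampleLoss ℓ f θ D i)

/-- The ordered (top-`q`-biased) loss `L_q(θ;D) = (1/q)·Σ_j γ_j L_{(j)}(θ;D)`. -/
def orderedLoss {dx dy dth n : ℕ} (ℓ : Vec dy → Vec dy → ℝ)
    (f : Vec dx → Vec dth → Vec dy) (γ : Fin n → ℝ) (q : ℝ)
    (θ : Vec dth) (D : Fin n → Vec dx × Vec dy) : ℝ :=
  (1 / q) * ∑ j, γ j * sampleLoss ℓ f θ D (ordIdx ℓ f θ D j)

/-- The average loss `L(θ;D) = (1/n)·Σ_i L_i(θ;D)`. -/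
def avgLoss {dx dy dth n : ℕ} (ℓ : Vec dy → Vec dy → ℝ)
    (f : Vec dx → Vec dth → Vec dy) (θ : Vec dth)
    (D : Fin n → Vec dx × Vec dy) : ℝ :=
  (1 / (n : ℝ)) * ∑ i, sampleLoss ℓ f θ D i

/-- `r_i(θ;D) = Σ_j 1{i = (j)}·γ_j`: the weight of sample `i` given by its rank in the
decreasing order of losses. -/
def rWeight {dx dy dth n : ℕ} (ℓ : Vec dy → Vec dy → ℝ)
    (f : Vec dx → Vec dth → Vec dy) (γ : Fin n → ℝ) (θ : Vec dth)
    (D : Fin n → Vec dx × Vec dy) (i : Fin n) : ℝ :=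
  ∑ j, if i = ordIdx ℓ f θ D j then γ j else 0

/-- Corrupted dataset `g(D) = ((g_i^x(x_i), g_i^y(y_i)))_{i=1}^n`. -/
def corrupt {dx dy n : ℕ} (gx : Fin n → Vec dx → Vec dx) (gy : Fin n → Vec dy → Vec dy)
    (D : Fin n → Vec dx × Vec dy) : Fin n → Vec dx × Vec dy :=
  fun i => (gx i (D i).1, gy i (D i).2)

/-- Expected loss `E_{(x,y)∼P}[ℓ(f(x;θ), y)]`. -/
def expLoss {dx dy dth : ℕ} (ℓ : Vec dy → Vec dy → ℝ)
    (f : Vec dx → Vec dth → Vec dy) (P : Measure (Vec dx × Vec dy)) (θ : Vec dth) : ℝ :=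
  ∫ z, ℓ (f z.1 θ) z.2 ∂P

/-- Empirical Rademacher complexity
`R̂_n(Θ; D) = E_ξ[sup_{θ∈Θ} (1/n)·Σ_i ξ_i ℓ(f(x_i;θ), y_i)]`, where the expectation is over
i.i.d. uniform signs `ξ_i ∈ {−1, 1}` (written as an average over all `2^n` sign vectors). -/
def empRad {dx dy dth n : ℕ} (ℓ : Vec dy → Vec dy → ℝ)
    (f : Vec dx → Vec dth → Vec dy) (Θ : Set (Vec dth))
    (D : Fin n → Vec dx × Vec dy) : ℝ :=
  ((2 : ℝ) ^ n)⁻¹ * ∑ ε : Fin n → Bool,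
    ⨆ θ : Θ, (1 / (n : ℝ)) * ∑ i, (if ε i then (1 : ℝ) else -1) * ℓ (f (D i).1 θ) (D i).2

/-- The i.i.d. product measure `P^n` on datasets of `n` samples. -/
def iidMeasure {dx dy : ℕ} (P : Measure (Vec dx × Vec dy)) (n : ℕ) :
    Measure (Fin n → Vec dx × Vec dy) :=
  Measure.pi fun _ : Fin n => P

/-- The top-`q`-biased factor `Q_{n,q}(Θ, g)`. -/
def Qfactor {dx dy dth : ℕ} {n : ℕ} (ℓ : Vec dy → Vec dy → ℝ)
    (f : Vec dx → Vec dth → Vec dy) (γ : Fin n → ℝ) (q : ℝ)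
    (gx : Fin n → Vec dx → Vec dx) (gy : Fin n → Vec dy → Vec dy)
    (Θ : Set (Vec dth)) (P : Measure (Vec dx × Vec dy)) : ℝ :=
  ∫ D, ⨅ θ : Θ, (1 / (n : ℝ)) * ∑ i,
      ((rWeight ℓ f γ θ (corrupt gx gy D) i * n / q) *
          ℓ (f (gx i (D i).1) θ) (gy i (D i).2)
        - ℓ (f (D i).1 θ) (D i).2) ∂(iidMeasure P n)

/-- `Φ(D) = sup_{θ∈Θ} ( E_{(x,y)∼P}[ℓ(f(x;θ),y)] − L_q(θ; g(D)) )`. -/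
def Phi {dx dy dth n : ℕ} (ℓ : Vec dy → Vec dy → ℝ)
    (f : Vec dx → Vec dth → Vec dy) (γ : Fin n → ℝ) (q : ℝ)
    (gx : Fin n → Vec dx → Vec dx) (gy : Fin n → Vec dy → Vec dy)
    (Θ : Set (Vec dth)) (P : Measure (Vec dx × Vec dy))
    (D : Fin n → Vec dx × Vec dy) : ℝ :=
  ⨆ θ : Θ, (expLoss ℓ f P θ - orderedLoss ℓ f γ q θ (corrupt gx gy D))

/-!
Changing one sample changes only the `i0`-th corrupted loss, by at most `M`, and leaves the
expected loss untouched. Decreasing rearrangement is monotone and preserves the total, so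
raising one loss raises every sorted loss, with total increase equal to the raise; with weights
in `[0, s/n]` the weighted sorted sum therefore moves by at most `(s/n)·M`. Suprema of two
families that are pointwise within `c` of each other are within `c` of each other.
-/

theorem Tuple.comp_sort_le_comp_sort {n : ℕ} {α : Type*} [LinearOrder α] {f g : Fin n → α}
    (hfg : f ≤ g) (j : Fin n) : f (Tuple.sort f j) ≤ g (Tuple.sort g j) := by
  set a := g (Tuple.sort g j)
  have card_comp_sort (h : Fin n → α) : #{i | (h ∘ Tuple.sort h) i ≤ a} = #{i | h i ≤ a} :=
    card_equiv (Tuple.sort h) (by simp)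
  -- a sorted tuple is `≤ a` at position `j` iff more than `j` of its entries are `≤ a`
  have hg : j < #{i | g i ≤ a} := by
    rw [← card_comp_sort, Tuple.lt_card_le_iff_apply_le_of_monotone (Tuple.monotone_sort g)]
    rfl
  have hgf : #{i | g i ≤ a} ≤ #{i | f i ≤ a} :=
    card_le_card <| monotone_filter_right _ fun i _ hi => (hfg i).trans hi
  exact (Tuple.lt_card_le_iff_apply_le_of_monotone (Tuple.monotone_sort f)).mp
    (card_comp_sort f ▸ hg.trans_le hgf)

theorem abs_ciSup_sub_ciSup_le {ι : Sort*} [Nonempty ι] {F G : ι → ℝ}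
    (hF : BddAbove (Set.range F)) (hG : BddAbove (Set.range G)) {c : ℝ}
    (h : ∀ i, |F i - G i| ≤ c) : |(⨆ i, F i) - ⨆ i, G i| ≤ c := by
  have ciSup_sub_ciSup_le {F G : ι → ℝ} (hG : BddAbove (Set.range G))
      (h : ∀ i, F i - G i ≤ c) : (⨆ i, F i) - ⨆ i, G i ≤ c :=
    sub_le_iff_le_add.2 <| ciSup_le fun i =>
      (sub_le_iff_le_add.1 (h i)).trans (by gcongr; exact le_ciSup hG i)
  exact abs_sub_le_iff.2 ⟨ciSup_sub_ciSup_le hG fun i => (abs_sub_le_iff.1 (h i)).1,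
    ciSup_sub_ciSup_le hF fun i => (abs_sub_le_iff.1 (h i)).2⟩

def orderedSum {n : ℕ} (γ L : Fin n → ℝ) : ℝ :=
  ∑ j, γ j * L (Tuple.sort (fun i => -L i) j)

section orderedSum

variable {n : ℕ} {γ L L' : Fin n → ℝ}

theorem sorted_le_sorted (hLL' : L ≤ L') (j : Fin n) :
    L (Tuple.sort (fun i => -L i) j) ≤ L' (Tuple.sort (fun i => -L' i) j) :=
  neg_le_neg_iff.1 <| Tuple.comp_sort_le_comp_sort (f := fun i => -L' i) (g := fun i => -L i)
    (fun i => neg_le_neg (hLL' i)) j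

theorem orderedSum_mono (hγ : ∀ j, 0 ≤ γ j) (hLL' : L ≤ L') :
    orderedSum γ L ≤ orderedSum γ L' :=
  sum_le_sum fun j _ => mul_le_mul_of_nonneg_left (sorted_le_sorted hLL' j) (hγ j)

theorem orderedSum_le_add {c : ℝ} (hγ : ∀ j, γ j ≤ c) (hLL' : L ≤ L') :
    orderedSum γ L' ≤ orderedSum γ L + c * (∑ i, L' i - ∑ i, L i) := by
  rw [← sub_le_iff_le_add', orderedSum, orderedSum, ← sum_sub_distrib,
    ← Equiv.sum_comp (Tuple.sort fun i => -L' i) L', ← Equiv.sum_comp (Tuple.sort fun i => -L i) L,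
    ← sum_sub_distrib, mul_sum]
  refine sum_le_sum fun j _ => ?_
  rw [← mul_sub]
  exact mul_le_mul_of_nonneg_right (hγ j) (sub_nonneg.2 (sorted_le_sorted hLL' j))

theorem abs_orderedSum_sub_orderedSum_le {c : ℝ} (hγ : ∀ j, 0 ≤ γ j ∧ γ j ≤ c) (i₀ : Fin n)
    (hLL' : ∀ i, i ≠ i₀ → L i = L' i) :
    |orderedSum γ L - orderedSum γ L'| ≤ c * |L i₀ - L' i₀| := by
  wlog hle : L i₀ ≤ L' i₀ generalizing L L'
  · rw [abs_sub_comm, abs_sub_comm (L i₀)]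
    exact this (fun i hi => (hLL' i hi).symm) (le_of_not_ge hle)
  have hLL'_le : L ≤ L' := fun i => by
    by_cases hi : i = i₀
    · exact hi ▸ hle
    · exact (hLL' i hi).le
  have hsum : ∑ i, L' i - ∑ i, L i = L' i₀ - L i₀ := by
    rw [← sum_sub_distrib, Fintype.sum_eq_single i₀ fun i hi => by rw [hLL' i hi, sub_self]]
  rw [abs_sub_comm, abs_of_nonneg (sub_nonneg.2 (orderedSum_mono (fun j => (hγ j).1) hLL'_le)),
    abs_sub_comm, abs_of_nonneg (sub_nonneg.2 hle), ← hsum, sub_le_iff_le_add']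
  exact orderedSum_le_add (fun j => (hγ j).2) hLL'_le

end orderedSum

theorem orderedLoss_eq {dx dy dth n : ℕ} (ℓ : Vec dy → Vec dy → ℝ)
    (f : Vec dx → Vec dth → Vec dy) (γ : Fin n → ℝ) (q : ℝ) (θ : Vec dth)
    (D : Fin n → Vec dx × Vec dy) :
    orderedLoss ℓ f γ q θ D = (1 / q) * orderedSum γ (sampleLoss ℓ f θ D) :=
  rfl

theorem abs_Phi_sub_Phi_le_general
    (dx dy dth n : ℕ)
    (Xs : Set (Vec dx)) (Ys : Set (Vec dy))
    (P : Measure (Vec dx × Vec dy))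
    (f : Vec dx → Vec dth → Vec dy)
    (ℓ : Vec dy → Vec dy → ℝ)
    (Θ : Set (Vec dth)) (hΘ : Θ.Nonempty)
    (q s : ℝ) (hq : 0 < q) (hs : 0 < s)
    (γ : Fin n → ℝ) (hγ : ∀ j, 0 ≤ γ j ∧ γ j ≤ s / n)
    (gx : Fin n → Vec dx → Vec dx) (gy : Fin n → Vec dy → Vec dy)
    (hg : ∀ (i : Fin n), ∀ z ∈ Xs ×ˢ Ys, (gx i z.1, gy i z.2) ∈ Xs ×ˢ Ys)
    (M : ℝ)
    (hM : ∀ θ ∈ Θ, ∀ z ∈ Xs ×ˢ Ys, ∀ z' ∈ Xs ×ˢ Ys,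
      |ℓ (f z.1 θ) z.2 - ℓ (f z'.1 θ) z'.2| ≤ M)
    -- the supremum defining `Φ` is assumed finite on datasets supported in `X × Y`
    (hbdd : ∀ E : Fin n → Vec dx × Vec dy, (∀ i, E i ∈ Xs ×ˢ Ys) →
      BddAbove (Set.range fun θ : Θ =>
        expLoss ℓ f P θ - orderedLoss ℓ f γ q θ (corrupt gx gy E)))
    (D D' : Fin n → Vec dx × Vec dy)
    (hD : ∀ i, D i ∈ Xs ×ˢ Ys) (hD' : ∀ i, D' i ∈ Xs ×ˢ Ys)
    (i0 : Fin n) (hDD' : ∀ i, i ≠ i0 → D i = D' i) :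
    |Phi ℓ f γ q gx gy Θ P D - Phi ℓ f γ q gx gy Θ P D'| ≤ (s / q) * (M / n) := by
  have : Nonempty Θ := hΘ.to_subtype
  refine abs_ciSup_sub_ciSup_le (hbdd D hD) (hbdd D' hD') fun θ => ?_
  set L := sampleLoss ℓ f θ (corrupt gx gy D)
  set L' := sampleLoss ℓ f θ (corrupt gx gy D')
  have hLL' : ∀ i, i ≠ i0 → L i = L' i := fun i hi => by
    simp only [L, L', sampleLoss, corrupt, hDD' i hi]
  have hL_i0 : |L i0 - L' i0| ≤ M :=
    hM θ θ.2 _ (hg i0 (D i0) (hD i0)) _ (hg i0 (D' i0) (hD' i0))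
  calc |expLoss ℓ f P θ - orderedLoss ℓ f γ q θ (corrupt gx gy D)
        - (expLoss ℓ f P θ - orderedLoss ℓ f γ q θ (corrupt gx gy D'))|
      = 1 / q * |orderedSum γ L - orderedSum γ L'| := by
        rw [orderedLoss_eq, orderedLoss_eq, sub_sub_sub_cancel_left, ← mul_sub, abs_mul,
          abs_of_pos (one_div_pos.2 hq), abs_sub_comm]
    _ ≤ 1 / q * (s / n * M) := by
        gcongr
        exact (abs_orderedSum_sub_orderedSum_le hγ i0 hLL').trans (by gcongr)
    _ = (s / q) * (M / n) := by ring

/-- **Bounded differences of `Φ`.** If the datasets `D` and `D'` (with samples in `X × Y`)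
differ in exactly one point, then `|Φ(D) − Φ(D')| ≤ (s/q)·(M/n)`. -/
theorem abs_Phi_sub_Phi_le
    (dx dy dth n : ℕ) (hn : 0 < n)
    (Xs : Set (Vec dx)) (Ys : Set (Vec dy))
    (P : Measure (Vec dx × Vec dy)) [IsProbabilityMeasure P]
    (hP : ∀ᵐ z ∂P, z ∈ Xs ×ˢ Ys)
    (f : Vec dx → Vec dth → Vec dy)
    (ℓ : Vec dy → Vec dy → ℝ) (hℓ : ∀ a b, 0 ≤ ℓ a b)
    (Θ : Set (Vec dth)) (hΘ : Θ.Nonempty)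
    (q s : ℝ) (hq : 0 < q) (hs : 0 < s)
    (γ : Fin n → ℝ) (hγ : ∀ j, 0 ≤ γ j ∧ γ j ≤ s / n)
    (gx : Fin n → Vec dx → Vec dx) (gy : Fin n → Vec dy → Vec dy)
    (hg : ∀ (i : Fin n), ∀ z ∈ Xs ×ˢ Ys, (gx i z.1, gy i z.2) ∈ Xs ×ˢ Ys)
    (M : ℝ)
    (hM : ∀ θ ∈ Θ, ∀ z ∈ Xs ×ˢ Ys, ∀ z' ∈ Xs ×ˢ Ys,
      |ℓ (f z.1 θ) z.2 - ℓ (f z'.1 θ) z'.2| ≤ M)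
    -- the supremum defining `Φ` is assumed finite on datasets supported in `X × Y`
    (hbdd : ∀ E : Fin n → Vec dx × Vec dy, (∀ i, E i ∈ Xs ×ˢ Ys) →
      BddAbove (Set.range fun θ : Θ =>
        expLoss ℓ f P θ - orderedLoss ℓ f γ q θ (corrupt gx gy E)))
    (D D' : Fin n → Vec dx × Vec dy)
    (hD : ∀ i, D i ∈ Xs ×ˢ Ys) (hD' : ∀ i, D' i ∈ Xs ×ˢ Ys)
    (i0 : Fin n) (hDD' : ∀ i, i ≠ i0 → D i = D' i) :
    |Phi ℓ f γ q gx gy Θ P D - Phi ℓ f γ q gx gy Θ P D'| ≤ (s / q) * (M / n) :=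
  abs_Phi_sub_Phi_le_general dx dy dth n Xs Ys P f ℓ Θ hΘ q s hq hs γ hγ gx gy hg M hM hbdd D D' hD
    hD' i0 hDD'
end
end
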